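/- arXiv:2106.06392 — 2 statements merged into one kernel-verified Lean document; each statement's English description precedes it below -/
import Mathlib

section
/- For a polynomial P of degree d ≥ 2, the limit g_P(z) = lim_{k→∞} (1/d^k) log⁺|P^[k](z)| exists for every z ∈ ℂ, is nonnegative, and vanishes exactly on the filled Julia set K_P. -/
set_option maxHeartbeats 1000000

open Filter Topology Metric MeasureTheory Polynomial

/-- `log⁺ x = max (log x) 0`. -/
noncomputable def logPlus (x : ℝ) : ℝ := max (Real.log x) 0

/-- The basin of attraction of infinity of a polynomial. -/
def basin (P : Polynomial ℂ) : Set ℂ :=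
  {z | Tendsto (fun k => ‖(fun w => P.eval w)^[k] z‖) atTop atTop}

/-- The filled Julia set of a polynomial. -/
def filledJulia (P : Polynomial ℂ) : Set ℂ := (basin P)ᶜ

lemma logPlus_nonneg (x : ℝ) : 0 ≤ logPlus x := le_max_right _ _
lemma log_le_logPlus (x : ℝ) : Real.log x ≤ logPlus x := le_max_left _ _
lemma logPlus_of_one_le {x : ℝ} (hx : 1 ≤ x) : logPlus x = Real.log x :=
  max_eq_left (Real.log_nonneg hx)

lemma logPlus_mono {x y : ℝ} (hx : 0 ≤ x) (h : x ≤ y) : logPlus x ≤ logPlus y := by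
  rcases hx.eq_or_lt with rfl | hx'
  · simp [logPlus, Real.log_zero]
  · exact max_le_max (Real.log_le_log hx' h) le_rfl

lemma logPlus_mul_le {x y : ℝ} (hx : 0 ≤ x) (hy : 0 ≤ y) :
    logPlus (x * y) ≤ logPlus x + logPlus y := by
  rcases le_or_gt (x * y) 1 with h | h
  · have h0 : Real.log (x * y) ≤ 0 := Real.log_nonpos (by positivity) h
    rw [logPlus, max_eq_right h0]
    exact add_nonneg (logPlus_nonneg x) (logPlus_nonneg y)
  · have hx0 : 0 < x := by nlinarith
    have hy0 : 0 < y := by nlinarith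
    rw [logPlus, max_eq_left (Real.log_pos h).le, Real.log_mul hx0.ne' hy0.ne']
    exact add_le_add (log_le_logPlus x) (log_le_logPlus y)

lemma log_max_one {x : ℝ} (hx : 0 ≤ x) : Real.log (max 1 x) = logPlus x := by
  rcases le_total 1 x with h | h
  · rw [max_eq_right h, logPlus_of_one_le h]
  · rw [max_eq_left h, Real.log_one, logPlus, max_eq_right (Real.log_nonpos hx h)]

lemma poly_upper (P : Polynomial ℂ) (w : ℂ) :
    ‖P.eval w‖ ≤ (∑ i ∈ Finset.range (P.natDegree + 1), ‖P.coeff i‖) *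
      max 1 ‖w‖ ^ P.natDegree := by
  rw [Polynomial.eval_eq_sum_range, Finset.sum_mul]
  refine (norm_sum_le _ _).trans (Finset.sum_le_sum fun i hi => ?_)
  rw [norm_mul, norm_pow]
  have h1 : (1:ℝ) ≤ max 1 ‖w‖ := le_max_left _ _
  have hh : ‖w‖ ^ i ≤ max 1 ‖w‖ ^ P.natDegree := by
    calc ‖w‖ ^ i ≤ max 1 ‖w‖ ^ i :=
          pow_le_pow_left₀ (norm_nonneg _) (le_max_right _ _) i
      _ ≤ max 1 ‖w‖ ^ P.natDegree :=
          pow_le_pow_right₀ h1 (Nat.lt_succ_iff.mp (Finset.mem_range.mp hi))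
  exact mul_le_mul_of_nonneg_left hh (norm_nonneg _)

lemma poly_lower (P : Polynomial ℂ) (w : ℂ) (hw : 1 ≤ ‖w‖) :
    ‖P.leadingCoeff‖ * ‖w‖ ^ P.natDegree -
      (∑ i ∈ Finset.range P.natDegree, ‖P.coeff i‖) * ‖w‖ ^ (P.natDegree - 1)
      ≤ ‖P.eval w‖ := by
  rw [Polynomial.eval_eq_sum_range, Finset.sum_range_succ, Polynomial.coeff_natDegree]
  set S := ∑ i ∈ Finset.range P.natDegree, P.coeff i * w ^ i with hS
  have h1 : ‖P.leadingCoeff * w ^ P.natDegree‖ - ‖S‖ ≤ ‖S + P.leadingCoeff * w ^ P.natDegree‖ := by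
    have h := norm_sub_le (S + P.leadingCoeff * w ^ P.natDegree) S
    simp only [add_sub_cancel_left] at h
    linarith
  have h2 : ‖S‖ ≤ (∑ i ∈ Finset.range P.natDegree, ‖P.coeff i‖) * ‖w‖ ^ (P.natDegree - 1) := by
    rw [hS, Finset.sum_mul]
    refine (norm_sum_le _ _).trans (Finset.sum_le_sum fun i hi => ?_)
    rw [norm_mul, norm_pow]
    exact mul_le_mul_of_nonneg_left
      (pow_le_pow_right₀ hw (Nat.le_sub_one_of_lt (Finset.mem_range.mp hi))) (norm_nonneg _)
  have h3 : ‖P.leadingCoeff * w ^ P.natDegree‖ = ‖P.leadingCoeff‖ * ‖w‖ ^ P.natDegree := by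
    rw [norm_mul, norm_pow]
  linarith

lemma key_est (P : Polynomial ℂ) (hd : 2 ≤ P.natDegree) :
    ∃ R C : ℝ, 1 ≤ R ∧ 0 ≤ C ∧
      (∀ w : ℂ, R ≤ ‖w‖ → 2 * ‖w‖ ≤ ‖P.eval w‖) ∧
      (∀ w : ℂ, |logPlus ‖P.eval w‖ - P.natDegree * logPlus ‖w‖| ≤ C) := by
  have hP : P ≠ 0 := fun h => by simp [h] at hd
  set d := P.natDegree with hdd
  set a := ‖P.leadingCoeff‖ with haa
  have ha : 0 < a := norm_pos_iff.mpr (Polynomial.leadingCoeff_ne_zero.mpr hP)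
  set A := ∑ i ∈ Finset.range (d + 1), ‖P.coeff i‖ with hAA
  set A' := ∑ i ∈ Finset.range d, ‖P.coeff i‖ with hAA'
  have hA'0 : 0 ≤ A' := Finset.sum_nonneg fun i _ => norm_nonneg _
  set R := 1 + (2 * A' + 4) / a with hRR
  have hR1 : 1 ≤ R := by
    have h : 0 ≤ (2 * A' + 4) / a := div_nonneg (by linarith) ha.le
    rw [hRR]
    linarith
  -- lower bounds for |w| ≥ R
  have hlow : ∀ w : ℂ, R ≤ ‖w‖ →
      2 * ‖w‖ ≤ ‖P.eval w‖ ∧ a / 2 * ‖w‖ ^ d ≤ ‖P.eval w‖ := by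
    intro w hw
    have hw1 : 1 ≤ ‖w‖ := hR1.trans hw
    have hw0 : (0:ℝ) < ‖w‖ := lt_of_lt_of_le one_pos hw1
    have hmain := poly_lower P w hw1
    have hsplit : ‖w‖ ^ d = ‖w‖ ^ (d - 1) * ‖w‖ := by
      conv_lhs => rw [show d = (d - 1) + 1 by omega]
      rw [pow_succ]
    have haw : a + 2 * A' + 4 ≤ a * ‖w‖ := by
      have := mul_le_mul_of_nonneg_left hw ha.le
      rw [hRR] at this
      have h2 : a * (1 + (2 * A' + 4) / a) = a + (2 * A' + 4) := by field_simp
      linarith [h2 ▸ this]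
    have hpe : ‖w‖ ^ (d - 1) * (a * ‖w‖ - A') ≤ ‖P.eval w‖ := by
      have : ‖w‖ ^ (d - 1) * (a * ‖w‖ - A') =
          a * ‖w‖ ^ d - A' * ‖w‖ ^ (d - 1) := by rw [hsplit]; ring
      linarith [hmain, this.le]
    have hwe : ‖w‖ ≤ ‖w‖ ^ (d - 1) := le_self_pow₀ hw1 (by omega)
    have hpow0 : (0:ℝ) < ‖w‖ ^ (d - 1) := by positivity
    constructor
    · have h4 : 4 ≤ a * ‖w‖ - A' := by linarith
      nlinarith
    · have h5 : a * ‖w‖ / 2 ≤ a * ‖w‖ - A' := by linarith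
      have : ‖w‖ ^ (d - 1) * (a * ‖w‖ / 2) ≤ ‖w‖ ^ (d - 1) * (a * ‖w‖ - A') :=
        mul_le_mul_of_nonneg_left h5 hpow0.le
      have heq : ‖w‖ ^ (d - 1) * (a * ‖w‖ / 2) = a / 2 * ‖w‖ ^ d := by
        rw [hsplit]; ring
      linarith
  -- upper bound on log⁺
  have hup : ∀ w : ℂ, logPlus ‖P.eval w‖ ≤ logPlus A + d * logPlus ‖w‖ := by
    intro w
    have h1 := poly_upper P w
    have hM : (0:ℝ) ≤ max 1 ‖w‖ := le_trans zero_le_one (le_max_left _ _)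
    have hA0 : 0 ≤ A := Finset.sum_nonneg fun i _ => norm_nonneg _
    calc logPlus ‖P.eval w‖ ≤ logPlus (A * max 1 ‖w‖ ^ d) :=
          logPlus_mono (norm_nonneg _) h1
      _ ≤ logPlus A + logPlus (max 1 ‖w‖ ^ d) := logPlus_mul_le hA0 (by positivity)
      _ = logPlus A + d * logPlus ‖w‖ := by
          rw [logPlus_of_one_le (one_le_pow₀ (le_max_left _ _)), Real.log_pow,
            log_max_one (norm_nonneg w)]
  refine ⟨R, logPlus A + d * Real.log R + |Real.log (a / 2)|, hR1, ?_, fun w hw => (hlow w hw).1, ?_⟩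
  · have h1 := logPlus_nonneg A
    have h2 : 0 ≤ Real.log R := Real.log_nonneg hR1
    have h3 := abs_nonneg (Real.log (a / 2))
    have h4 : (0:ℝ) ≤ d := Nat.cast_nonneg _
    have h5 : 0 ≤ (d:ℝ) * Real.log R := mul_nonneg h4 h2
    linarith
  · intro w
    have hupper : logPlus ‖P.eval w‖ - d * logPlus ‖w‖ ≤ logPlus A := by
      linarith [hup w]
    have hRlog : 0 ≤ Real.log R := Real.log_nonneg hR1
    rcases le_or_gt R ‖w‖ with hw | hw
    · -- |w| ≥ R
      have hw1 : 1 ≤ ‖w‖ := hR1.trans hw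
      have hlp : logPlus ‖w‖ = Real.log ‖w‖ := logPlus_of_one_le hw1
      have hple := (hlow w hw).2
      have hpos : (0:ℝ) < ‖w‖ ^ d := by positivity
      have ha2 : (0:ℝ) < a / 2 := by linarith
      have hlog2 : Real.log (a / 2 * ‖w‖ ^ d) ≤ logPlus ‖P.eval w‖ :=
        (Real.log_le_log (mul_pos ha2 hpos) hple).trans (log_le_logPlus _)
      rw [Real.log_mul ha2.ne' hpos.ne', Real.log_pow] at hlog2
      rw [abs_le]
      constructor
      · rw [hlp]
        have := neg_abs_le (Real.log (a / 2))
        have hdln : (d:ℝ) * Real.log ‖w‖ = d * Real.log ‖w‖ := rfl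
        nlinarith [logPlus_nonneg A]
      · linarith [logPlus_nonneg A, abs_nonneg (Real.log (a / 2)),
          mul_nonneg (Nat.cast_nonneg (α := ℝ) d) hRlog]
    · -- |w| < R
      have hlpw : logPlus ‖w‖ ≤ Real.log R := by
        rcases (norm_nonneg w).eq_or_lt with h0 | h0
        · rw [logPlus, ← h0, Real.log_zero]; simpa using hRlog
        · exact max_le ((Real.log_le_log h0 hw.le)) hRlog
      rw [abs_le]
      constructor
      · have hd0 : (0:ℝ) ≤ d := Nat.cast_nonneg _
        have h1 : (d:ℝ) * logPlus ‖w‖ ≤ d * Real.log R := mul_le_mul_of_nonneg_left hlpw hd0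
        have h2 := logPlus_nonneg ‖P.eval w‖
        have := abs_nonneg (Real.log (a / 2))
        linarith [logPlus_nonneg A]
      · have hRlog' : 0 ≤ (d:ℝ) * Real.log R := mul_nonneg (Nat.cast_nonneg _) hRlog
        linarith [logPlus_nonneg A, abs_nonneg (Real.log (a / 2))]

theorem green_exists_nonneg_vanishes_on_filledJulia (P : Polynomial ℂ)
    (hd : 2 ≤ P.natDegree) :
    ∃ g : ℂ → ℝ,
      (∀ z : ℂ, Tendsto
        (fun k => logPlus ‖(fun w => P.eval w)^[k] z‖ / (P.natDegree : ℝ) ^ k)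
        atTop (𝓝 (g z))) ∧
      (∀ z : ℂ, 0 ≤ g z) ∧
      (∀ z : ℂ, g z = 0 ↔ z ∈ filledJulia P) := by
  obtain ⟨R, C, hR1, hC0, hesc, hlog⟩ := key_est P hd
  set d := P.natDegree with hdd
  set f : ℂ → ℂ := fun w => P.eval w with hf
  have hd1 : (1:ℝ) < d := by
    have : (2:ℝ) ≤ d := by exact_mod_cast hd
    linarith
  have hd0 : (0:ℝ) < d := lt_trans one_pos hd1
  set u : ℂ → ℕ → ℝ := fun z k => logPlus ‖f^[k] z‖ with hu
  set b : ℂ → ℕ → ℝ := fun z k => u z k / (d:ℝ) ^ k with hb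
  have hr1 : (1:ℝ)/d < 1 := by rw [div_lt_one hd0]; exact hd1
  have hr0 : (0:ℝ) < 1/d := by positivity
  have hdist : ∀ z k, dist (b z k) (b z (k+1)) ≤ (C/d) * (1/d)^k := by
    intro z k
    have hstep : |u z (k+1) - (d:ℝ) * u z k| ≤ C := by
      have hit : f^[k+1] z = P.eval (f^[k] z) := Function.iterate_succ_apply' f k z
      have := hlog (f^[k] z)
      rw [hu]
      simpa [hit] using this
    rw [Real.dist_eq]
    have hdne : (d:ℝ) ≠ 0 := hd0.ne'
    have hpk : (0:ℝ) < (d:ℝ)^(k+1) := by positivity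
    have heq : b z k - b z (k+1) = ((d:ℝ) * u z k - u z (k+1)) / (d:ℝ)^(k+1) := by
      rw [hb]
      simp only [pow_succ]
      field_simp
    rw [heq, abs_div, abs_of_pos hpk]
    have h2 : |(d:ℝ) * u z k - u z (k+1)| ≤ C := by rw [abs_sub_comm]; exact hstep
    calc |(d:ℝ) * u z k - u z (k+1)| / (d:ℝ)^(k+1) ≤ C / (d:ℝ)^(k+1) := by gcongr
      _ = (C/d) * (1/d)^k := by rw [div_pow, one_pow]; ring
  have hcauchy : ∀ z, CauchySeq (b z) :=
    fun z => cauchySeq_of_le_geometric (1/d) (C/d) hr1 (hdist z)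
  set g : ℂ → ℝ := fun z => limUnder atTop (b z) with hg
  have htend : ∀ z, Tendsto (b z) atTop (𝓝 (g z)) := fun z => (hcauchy z).tendsto_limUnder
  have hbnonneg : ∀ z k, 0 ≤ b z k := by
    intro z k
    rw [hb]
    exact div_nonneg (logPlus_nonneg _) (by positivity)
  have hgnonneg : ∀ z, 0 ≤ g z := fun z => ge_of_tendsto' (htend z) (hbnonneg z)
  have htail : ∀ z k, dist (b z k) (g z) ≤ (C/d) * (1/d)^k / (1 - 1/d) :=
    fun z k => dist_le_of_le_geometric_of_tendsto (1/d) (C/d) hr1 (hdist z) (htend z) k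
  set D := (C/d) / (1 - 1/d) with hD
  have hD0 : 0 ≤ D := div_nonneg (div_nonneg hC0 hd0.le) (by linarith)
  have hglb : ∀ z k, (u z k - D) / (d:ℝ)^k ≤ g z := by
    intro z k
    have h := htail z k
    have hbd : (C/d) * (1/d)^k / (1 - 1/d) = D / (d:ℝ)^k := by
      rw [hD, div_pow, one_pow]
      ring
    rw [hbd, Real.dist_eq] at h
    have h2 := (abs_le.mp h).2
    have hpk : (0:ℝ) < (d:ℝ)^k := by positivity
    have heq2 : (u z k - D) / (d:ℝ)^k = b z k - D / (d:ℝ)^k := by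
      rw [hb, sub_div]
    rw [heq2]
    linarith
  have hescape : ∀ z : ℂ, (∃ k, R < ‖f^[k] z‖) → z ∈ basin P := by
    rintro z ⟨k₀, hk₀⟩
    have hgrow : ∀ j : ℕ, 2^j * R ≤ ‖f^[k₀ + j] z‖ := by
      intro j
      induction j with
      | zero => simpa using hk₀.le
      | succ j ih =>
        have hpj : (1:ℝ) ≤ 2^j := one_le_pow₀ one_le_two
        have h1 : R ≤ ‖f^[k₀ + j] z‖ := by nlinarith
        have h2 := hesc _ h1
        have h3 : f^[k₀ + (j+1)] z = P.eval (f^[k₀ + j] z) := by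
          rw [show k₀ + (j+1) = (k₀ + j) + 1 from rfl, Function.iterate_succ_apply' f]
        rw [h3]
        calc (2:ℝ)^(j+1) * R = 2 * (2^j * R) := by ring
          _ ≤ 2 * ‖f^[k₀+j] z‖ := by linarith
          _ ≤ ‖P.eval (f^[k₀+j] z)‖ := h2
    have h4 : Tendsto (fun j : ℕ => (2:ℝ)^j * R) atTop atTop :=
      (tendsto_pow_atTop_atTop_of_one_lt one_lt_two).atTop_mul_const
        (lt_of_lt_of_le one_pos hR1)
    have h5 : Tendsto (fun j : ℕ => ‖f^[j + k₀] z‖) atTop atTop :=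
      tendsto_atTop_mono (fun j => by rw [Nat.add_comm]; exact hgrow j) h4
    exact (tendsto_add_atTop_iff_nat k₀).mp h5
  have hbound : ∀ z : ℂ, z ∉ basin P → ∀ k, ‖f^[k] z‖ ≤ R := by
    intro z hz k
    by_contra h
    exact hz (hescape z ⟨k, not_le.mp h⟩)
  refine ⟨g, fun z => htend z, hgnonneg, fun z => ?_⟩
  constructor
  · intro h0
    by_contra hmem
    have hz : z ∈ basin P := by
      simp only [filledJulia, Set.mem_compl_iff, not_not] at hmem
      exact hmem
    have htt : Tendsto (fun k => ‖f^[k] z‖) atTop atTop := hz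
    obtain ⟨k, hk⟩ := (htt.eventually_ge_atTop (Real.exp (D + 1))).exists
    have hlogk : D + 1 ≤ u z k := by
      have h := Real.log_le_log (Real.exp_pos _) hk
      rw [Real.log_exp] at h
      exact h.trans (log_le_logPlus _)
    have hG := hglb z k
    have hpk : (0:ℝ) < (d:ℝ)^k := by positivity
    have hpos : 0 < g z := lt_of_lt_of_le (div_pos (by linarith) hpk) hG
    rw [h0] at hpos
    exact lt_irrefl 0 hpos
  · intro hmem
    have hz : z ∉ basin P := hmem
    have hub : ∀ k, b z k ≤ Real.log R * (1/d)^k := by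
      intro k
      have h1 : u z k ≤ Real.log R := by
        have h := logPlus_mono (norm_nonneg _) (hbound z hz k)
        rw [hu]
        rwa [logPlus_of_one_le hR1] at h
      have heq : Real.log R * (1/d)^k = Real.log R / (d:ℝ)^k := by
        rw [div_pow, one_pow]; ring
      rw [heq]
      show u z k / (d:ℝ)^k ≤ Real.log R / (d:ℝ)^k
      gcongr
    have h0' : Tendsto (fun k : ℕ => Real.log R * (1/d)^k) atTop (𝓝 0) := by
      have := (tendsto_pow_atTop_nhds_zero_of_lt_one hr0.le hr1).const_mul (Real.log R)
      simpa using this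
    have hsq : Tendsto (b z) atTop (𝓝 0) :=
      tendsto_of_tendsto_of_tendsto_of_le_of_le tendsto_const_nhds h0'
        (fun k => hbnonneg z k) hub
    exact tendsto_nhds_unique (htend z) hsq
end

section
/- Let K be a non-polar compact subset of ℂ and {P_n} a K-guided sequence of polynomials (deg P_n = n). Then there exist R > 0 and N ∈ ℕ such that for all n ≥ N, the filled Julia set K_n of P_n satisfies K_n ⊆ P_n⁻¹(closed disk of radius R) ⊆ open disk of radius R. -/
open Filter Topology Metric MeasureTheory Polynomial

/-- The logarithmic energy of a measure (with the sign convention that the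
equilibrium measure maximizes the energy). -/
noncomputable def energy (μ : Measure ℂ) : ℝ :=
  ∫ z, ∫ w, Real.log ‖z - w‖ ∂μ ∂μ

/-- `μ` is the equilibrium measure of `K`: a probability measure supported on `K`
maximizing the logarithmic energy among such measures. -/
def IsEquilibrium (K : Set ℂ) (μ : Measure ℂ) : Prop :=
  IsProbabilityMeasure μ ∧ μ Kᶜ = 0 ∧
    ∀ ν : Measure ℂ, IsProbabilityMeasure ν → ν Kᶜ = 0 → energy ν ≤ energy μ

/-- `K` is non-polar: it carries a probability measure of finite logarithmic energy. -/
def NonPolar (K : Set ℂ) : Prop :=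
  ∃ μ : Measure ℂ, IsProbabilityMeasure μ ∧ μ Kᶜ = 0 ∧
    Integrable (fun p : ℂ × ℂ => Real.log ‖p.1 - p.2‖) (μ.prod μ)

/-- The Green's function (with pole at infinity) of the unbounded component of the
complement of a compact set, expressed via its equilibrium measure `ω`. -/
noncomputable def greenK (ω : Measure ℂ) (z : ℂ) : ℝ :=
  (∫ w, Real.log ‖z - w‖ ∂ω) - energy ω

/-! ### Auxiliary lemmas -/

lemma log_le_max_aux {x y : ℝ} (hx : 0 ≤ x) (hxy : x ≤ y) :
    Real.log x ≤ max (Real.log y) 0 := by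
  rcases le_or_gt x 1 with h | h
  · exact le_trans (Real.log_nonpos hx h) (le_max_right _ _)
  · exact le_trans (Real.log_le_log (by linarith) hxy) (le_max_left _ _)

lemma ms_prod_bounds (s : Multiset ℂ) {l u : ℝ} (hl : 0 ≤ l)
    (h : ∀ r ∈ s, l ≤ ‖r‖ ∧ ‖r‖ ≤ u) :
    l ^ Multiset.card s ≤ ‖s.prod‖ ∧ ‖s.prod‖ ≤ u ^ Multiset.card s := by
  induction s using Multiset.induction with
  | empty => simp
  | cons r s ih =>
    have hr := h r (Multiset.mem_cons_self _ _)
    have ihs := ih (fun x hx => h x (Multiset.mem_cons_of_mem hx))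
    have hu : 0 ≤ u := hl.trans (hr.1.trans hr.2)
    simp only [Multiset.prod_cons, Multiset.card_cons, norm_mul, pow_succ']
    exact ⟨mul_le_mul hr.1 ihs.1 (pow_nonneg hl _) (norm_nonneg _),
      mul_le_mul hr.2 ihs.2 (norm_nonneg _) hu⟩

lemma eval_factored (Q : Polynomial ℂ) (z : ℂ) :
    Q.eval z = Q.leadingCoeff * ((Q.roots.map fun r => z - r).prod) := by
  conv_lhs => rw [← Q.C_leadingCoeff_mul_prod_multiset_X_sub_C
    (Polynomial.splits_iff_card_roots.mp (IsAlgClosed.splits Q))]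
  rw [eval_mul, eval_C, eval_multiset_prod, Multiset.map_map]
  simp

lemma norm_eval_bounds (Q : Polynomial ℂ) {ρ : ℝ}
    (hroots : ∀ z : ℂ, Q.eval z = 0 → ‖z‖ ≤ ρ) (hQ : Q ≠ 0) {z : ℂ} (hz : ρ ≤ ‖z‖) :
    ‖Q.leadingCoeff‖ * (‖z‖ - ρ) ^ Q.natDegree ≤ ‖Q.eval z‖ ∧
    ‖Q.eval z‖ ≤ ‖Q.leadingCoeff‖ * (‖z‖ + ρ) ^ Q.natDegree := by
  have hcard : Multiset.card Q.roots = Q.natDegree :=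
    Polynomial.splits_iff_card_roots.mp (IsAlgClosed.splits Q)
  have hb : ∀ r ∈ Q.roots.map fun r => z - r, ‖z‖ - ρ ≤ ‖r‖ ∧ ‖r‖ ≤ ‖z‖ + ρ := by
    intro x hx
    obtain ⟨r, hr, rfl⟩ := Multiset.mem_map.mp hx
    have hrρ : ‖r‖ ≤ ρ := hroots r ((Polynomial.mem_roots hQ).mp hr)
    constructor
    · have := norm_sub_norm_le z r; linarith [this]
    · have := norm_sub_le z r; linarith
  have hbnd := ms_prod_bounds _ (by linarith : (0:ℝ) ≤ ‖z‖ - ρ) hb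
  rw [Multiset.card_map, hcard] at hbnd
  rw [eval_factored Q z, norm_mul]
  have hc : 0 ≤ ‖Q.leadingCoeff‖ := norm_nonneg _
  exact ⟨mul_le_mul_of_nonneg_left hbnd.1 hc, mul_le_mul_of_nonneg_left hbnd.2 hc⟩

lemma log_meas (z : ℂ) : Measurable (fun w : ℂ => Real.log ‖z - w‖) :=
  Real.measurable_log.comp ((measurable_const.sub measurable_id).norm)

lemma ae_memK {K : Set ℂ} {ω : Measure ℂ} (hsupp : ω Kᶜ = 0) : ∀ᵐ z ∂ω, z ∈ K := by
  rw [ae_iff]; exact hsupp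

lemma energy_le_bound {K : Set ℂ} {ω : Measure ℂ} [IsProbabilityMeasure ω]
    (hsupp : ω Kᶜ = 0) {M : ℝ} (hM : ∀ z ∈ K, ‖z‖ ≤ M) :
    energy ω ≤ max (Real.log (2 * M)) 0 := by
  set C := max (Real.log (2 * M)) 0 with hC
  have hC0 : 0 ≤ C := le_max_right _ _
  have hinner : ∀ z ∈ K, (∫ w, Real.log ‖z - w‖ ∂ω) ≤ C := by
    intro z hz
    by_cases hint : Integrable (fun w => Real.log ‖z - w‖) ω
    · have hle : ∀ᵐ w ∂ω, Real.log ‖z - w‖ ≤ C := by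
        filter_upwards [ae_memK hsupp] with w hw
        exact log_le_max_aux (norm_nonneg _)
          (by have := norm_sub_le z w; have := hM z hz; have := hM w hw; linarith)
      calc ∫ w, Real.log ‖z - w‖ ∂ω ≤ ∫ _, C ∂ω :=
            integral_mono_ae hint (integrable_const C) hle
        _ = C := by simp
    · rw [integral_undef hint]; exact hC0
  by_cases hout : Integrable (fun z => ∫ w, Real.log ‖z - w‖ ∂ω) ω
  · have h1 : energy ω ≤ ∫ _, C ∂ω := by
      refine integral_mono_ae hout (integrable_const C) ?_
      filter_upwards [ae_memK hsupp] with z hz using hinner z hz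
    simpa using h1
  · rw [energy, integral_undef hout]; exact hC0

lemma pot_ge_bound {K : Set ℂ} {ω : Measure ℂ} [IsProbabilityMeasure ω]
    (hsupp : ω Kᶜ = 0) {M : ℝ} (hM : ∀ z ∈ K, ‖z‖ ≤ M)
    {z : ℂ} {R0 : ℝ} (hzn : ‖z‖ = R0) (hR0 : M < R0) :
    Real.log (R0 - M) ≤ ∫ w, Real.log ‖z - w‖ ∂ω := by
  have hbd : ∀ᵐ w ∂ω, ‖Real.log ‖z - w‖‖ ≤ max |Real.log (R0 - M)| |Real.log (R0 + M)| := by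
    filter_upwards [ae_memK hsupp] with w hw
    have hMw := hM w hw
    have h1 : R0 - M ≤ ‖z - w‖ := by have := norm_sub_norm_le z w; linarith
    have h2 : ‖z - w‖ ≤ R0 + M := by have := norm_sub_le z w; linarith
    rw [Real.norm_eq_abs]
    exact abs_le_max_abs_abs (Real.log_le_log (by linarith) h1)
      (Real.log_le_log (by linarith [norm_nonneg (z - w), (h1.trans_lt' (by linarith) : (0:ℝ) < ‖z - w‖)]) h2)
  have hint : Integrable (fun w => Real.log ‖z - w‖) ω :=
    Integrable.mono' (integrable_const _) ((log_meas z).aestronglyMeasurable) hbd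
  have hmono : ∀ᵐ w ∂ω, Real.log (R0 - M) ≤ Real.log ‖z - w‖ := by
    filter_upwards [ae_memK hsupp] with w hw
    have hMw := hM w hw
    have h1 : R0 - M ≤ ‖z - w‖ := by have := norm_sub_norm_le z w; linarith
    exact Real.log_le_log (by linarith) h1
  calc Real.log (R0 - M) = ∫ _, Real.log (R0 - M) ∂ω := by simp
    _ ≤ ∫ w, Real.log ‖z - w‖ ∂ω := integral_mono_ae (integrable_const _) hint hmono

lemma growth_aux {ρ q : ℝ} (hρ0 : 0 ≤ ρ) (hq : 0 < q) {N1 : ℕ} (hN1 : 4 * q < 2 ^ N1)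
    {R : ℝ} (hRρ : 2 * ρ ≤ R) (hR2 : 2 ≤ R) (hRq : 4 * q / Real.exp 1 ≤ R)
    {n : ℕ} (hn : N1 + 1 ≤ n) {x : ℝ} (hx : R ≤ x) :
    2 * x * q ^ n ≤ (Real.exp 1 * (x - ρ)) ^ n := by
  obtain ⟨m, rfl⟩ : ∃ m, n = m + 1 := ⟨n - 1, by omega⟩
  have hm : N1 ≤ m := by omega
  have he1 : (0:ℝ) < Real.exp 1 := Real.exp_pos 1
  have he11 : (1:ℝ) ≤ Real.exp 1 := Real.one_le_exp (by norm_num)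
  have h4q : 4 * q ≤ Real.exp 1 * x := by
    have := (div_le_iff₀ he1).mp (le_trans hRq hx)
    linarith
  have hpow : (4 * q : ℝ) ≤ 2 ^ m := by
    have h2 : ((2:ℝ)) ^ N1 ≤ 2 ^ m := pow_le_pow_right₀ one_le_two hm
    linarith
  have hxpos : (0:ℝ) < x := by linarith
  have hxρ2 : x / 2 ≤ x - ρ := by linarith
  have h2q : 2 * q ≤ Real.exp 1 * x / 2 := by linarith
  have hcore : 2 * q ≤ 2 ^ m * (Real.exp 1 / 2) := by
    nlinarith [pow_pos (zero_lt_two' ℝ) m]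
  calc 2 * x * q ^ (m + 1) = (2 * q) * (x * q ^ m) := by rw [pow_succ]; ring
    _ ≤ (2 ^ m * (Real.exp 1 / 2)) * (x * q ^ m) :=
        mul_le_mul_of_nonneg_right hcore (by positivity)
    _ = (2 * q) ^ m * (Real.exp 1 * x / 2) := by rw [mul_pow]; ring
    _ ≤ (Real.exp 1 * x / 2) ^ m * (Real.exp 1 * x / 2) :=
        mul_le_mul_of_nonneg_right (pow_le_pow_left₀ (by linarith) h2q m) (by positivity)
    _ = (Real.exp 1 * x / 2) ^ (m + 1) := (pow_succ _ m).symm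
    _ ≤ (Real.exp 1 * (x - ρ)) ^ (m + 1) := by
        apply pow_le_pow_left₀ (by positivity)
        nlinarith

theorem guided_filledJulia_bound (K : Set ℂ) (hK : IsCompact K) (hnp : NonPolar K)
    (ω : Measure ℂ) (hω : IsEquilibrium K ω)
    (P : ℕ → Polynomial ℂ) (hdeg : ∀ n, (P n).natDegree = n)
    (hzeros : ∃ ρ : ℝ, ∀ n, ∀ z : ℂ, (P n).eval z = 0 → ‖z‖ ≤ ρ)
    (a b : ℝ) (ha : 0 < a)
    (hlb : ∀ V : Set ℂ, IsCompact V → V ⊆ (convexHull ℝ K)ᶜ → ∀ ε > (0:ℝ),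
      ∀ᶠ n in atTop, ∀ z ∈ V, a * greenK ω z - b - ε ≤ logPlus ‖(P n).eval z‖ / n) :
    ∃ R > (0:ℝ), ∃ N : ℕ, ∀ n ≥ N,
      filledJulia (P n) ⊆ (fun z => (P n).eval z) ⁻¹' Metric.closedBall 0 R ∧
      (fun z => (P n).eval z) ⁻¹' Metric.closedBall 0 R ⊆ Metric.ball 0 R := by
  obtain ⟨hprob, hsupp, -⟩ := hω
  haveI := hprob
  obtain ⟨ρ0, hρP⟩ := hzeros
  set ρ : ℝ := max ρ0 0 with hρdef
  have hρ0 : 0 ≤ ρ := le_max_right _ _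
  have hρP' : ∀ n, ∀ z : ℂ, (P n).eval z = 0 → ‖z‖ ≤ ρ :=
    fun n z h => (hρP n z h).trans (le_max_left _ _)
  obtain ⟨M0, hM0⟩ := hK.isBounded.subset_closedBall 0
  set M : ℝ := max (max M0 1) ρ with hMdef
  have hM1 : (1:ℝ) ≤ M := le_trans (le_max_right _ _) (le_max_left _ _)
  have hMρ : ρ ≤ M := le_max_right _ _
  have hM : ∀ z ∈ K, ‖z‖ ≤ M := fun z hz =>
    (mem_closedBall_zero_iff.mp (hM0 hz)).trans ((le_max_left _ _).trans (le_max_left _ _))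
  set C : ℝ := max (Real.log (2 * M)) 0 with hCdef
  have hC0 : (0:ℝ) ≤ C := le_max_right _ _
  have hEC : energy ω ≤ C := energy_le_bound hsupp hM
  set L : ℝ := (2 + b) / a + C with hLdef
  set R0 : ℝ := M + Real.exp L with hR0def
  have hR0M : M < R0 := lt_add_of_pos_right _ (Real.exp_pos L)
  have hR0pos : (0:ℝ) < R0 := by linarith
  have hR0ρ : ρ < R0 := lt_of_le_of_lt hMρ hR0M
  have hgreen : ∀ z ∈ sphere (0:ℂ) R0, (1:ℝ) ≤ a * greenK ω z - b - 1 := by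
    intro z hz
    have hzn : ‖z‖ = R0 := mem_sphere_zero_iff_norm.mp hz
    have hpot := pot_ge_bound hsupp hM hzn hR0M
    have hlogL : Real.log (R0 - M) = L := by
      rw [hR0def]; simp [Real.log_exp]
    have hg : L - C ≤ greenK ω z := by
      simp only [greenK]; rw [hlogL] at hpot; linarith
    have hac : a * ((2 + b) / a) = 2 + b := mul_div_cancel₀ _ (ne_of_gt ha)
    have h1 : a * (L - C) ≤ a * greenK ω z := mul_le_mul_of_nonneg_left hg (le_of_lt ha)
    have hLC : L - C = (2 + b) / a := by rw [hLdef]; ring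
    rw [hLC, hac] at h1
    linarith
  have hVsub : sphere (0:ℂ) R0 ⊆ (convexHull ℝ K)ᶜ := by
    intro z hz hcz
    have hsub : convexHull ℝ K ⊆ closedBall 0 M :=
      convexHull_min (fun x hx => mem_closedBall_zero_iff.mpr (hM x hx)) (convex_closedBall _ _)
    have h1 : ‖z‖ ≤ M := mem_closedBall_zero_iff.mp (hsub hcz)
    have h2 : ‖z‖ = R0 := mem_sphere_zero_iff_norm.mp hz
    linarith
  obtain ⟨N0, hN0⟩ := eventually_atTop.mp (hlb _ (isCompact_sphere _ _) hVsub 1 one_pos)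
  set q : ℝ := R0 + ρ with hqdef
  have hq : (0:ℝ) < q := by rw [hqdef]; linarith
  obtain ⟨N1, hN1⟩ : ∃ n : ℕ, 4 * q < 2 ^ n := pow_unbounded_of_one_lt (4 * q) one_lt_two
  set R : ℝ := max (max (2 * ρ) 2) (4 * q / Real.exp 1) with hRdef
  have hR2 : (2:ℝ) ≤ R := le_trans (le_max_right _ _) (le_max_left _ _)
  have hRρ : 2 * ρ ≤ R := le_trans (le_max_left _ _) (le_max_left _ _)
  have hRq : 4 * q / Real.exp 1 ≤ R := le_max_right _ _
  have hRpos : (0:ℝ) < R := by linarith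
  set N : ℕ := max N0 (N1 + 1) with hNdef
  have hkey : ∀ n, N ≤ n → ∀ z : ℂ, R ≤ ‖z‖ → 2 * ‖z‖ ≤ ‖(P n).eval z‖ := by
    intro n hn z hz
    have hnN1 : N1 + 1 ≤ n := le_trans (le_max_right _ _) hn
    have hn1 : 1 ≤ n := by omega
    have hPn0 : P n ≠ 0 := by
      intro h
      have h2 := hdeg n
      rw [h, natDegree_zero] at h2
      omega
    have hz0 : ((R0:ℝ) : ℂ) ∈ sphere (0:ℂ) R0 := by
      rw [mem_sphere_zero_iff_norm, Complex.norm_real, Real.norm_of_nonneg hR0pos.le]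
    have hA := hN0 n (le_trans (le_max_left _ _) hn) _ hz0
    have hA2 : (1:ℝ) ≤ logPlus ‖(P n).eval ((R0:ℝ):ℂ)‖ / n := le_trans (hgreen _ hz0) hA
    have hn1' : (1:ℝ) ≤ (n:ℝ) := by exact_mod_cast hn1
    have hnpos : (0:ℝ) < (n:ℝ) := by linarith
    have hA3 : (n:ℝ) ≤ logPlus ‖(P n).eval ((R0:ℝ):ℂ)‖ := by
      have := (le_div_iff₀ hnpos).mp hA2; linarith
    have hlogx : (n:ℝ) ≤ Real.log ‖(P n).eval ((R0:ℝ):ℂ)‖ := by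
      rcases le_total (Real.log ‖(P n).eval ((R0:ℝ):ℂ)‖) 0 with h | h
      · rw [logPlus, max_eq_right h] at hA3; linarith
      · rw [logPlus, max_eq_left h] at hA3; exact hA3
    have hxpos : 0 < ‖(P n).eval ((R0:ℝ):ℂ)‖ := by
      by_contra h
      push_neg at h
      have hx0 : ‖(P n).eval ((R0:ℝ):ℂ)‖ = 0 := le_antisymm h (norm_nonneg _)
      rw [hx0, Real.log_zero] at hlogx
      linarith
    have hxexp : Real.exp 1 ^ n ≤ ‖(P n).eval ((R0:ℝ):ℂ)‖ := by
      calc Real.exp 1 ^ n = Real.exp (n:ℝ) := by rw [← Real.exp_nat_mul]; norm_num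
        _ ≤ Real.exp (Real.log ‖(P n).eval ((R0:ℝ):ℂ)‖) := Real.exp_le_exp.mpr hlogx
        _ = ‖(P n).eval ((R0:ℝ):ℂ)‖ := Real.exp_log hxpos
    have hub := (norm_eval_bounds (P n) (hρP' n) hPn0
      (z := ((R0:ℝ):ℂ)) (by rw [Complex.norm_real, Real.norm_of_nonneg hR0pos.le]; exact le_of_lt hR0ρ)).2
    rw [hdeg n, Complex.norm_real, Real.norm_of_nonneg hR0pos.le] at hub
    have hcq : Real.exp 1 ^ n ≤ ‖(P n).leadingCoeff‖ * q ^ n := by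
      rw [hqdef]; exact le_trans hxexp hub
    have hzρ : ρ ≤ ‖z‖ := by linarith
    have hlbz := (norm_eval_bounds (P n) (hρP' n) hPn0 hzρ).1
    rw [hdeg n] at hlbz
    have hG : 2 * ‖z‖ * q ^ n ≤ (Real.exp 1 * (‖z‖ - ρ)) ^ n :=
      growth_aux hρ0 hq hN1 hRρ hR2 hRq hnN1 hz
    have e1 : (Real.exp 1 * (‖z‖ - ρ)) ^ n = Real.exp 1 ^ n * (‖z‖ - ρ) ^ n := mul_pow _ _ _
    have e2 : Real.exp 1 ^ n * (‖z‖ - ρ) ^ n ≤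
        (‖(P n).leadingCoeff‖ * q ^ n) * (‖z‖ - ρ) ^ n :=
      mul_le_mul_of_nonneg_right hcq (pow_nonneg (by linarith) n)
    have e3 : (‖(P n).leadingCoeff‖ * q ^ n) * (‖z‖ - ρ) ^ n =
        (‖(P n).leadingCoeff‖ * (‖z‖ - ρ) ^ n) * q ^ n := by ring
    have e4 : (‖(P n).leadingCoeff‖ * (‖z‖ - ρ) ^ n) * q ^ n ≤ ‖(P n).eval z‖ * q ^ n :=
      mul_le_mul_of_nonneg_right hlbz (pow_nonneg hq.le n)
    have h5 : (2 * ‖z‖) * q ^ n ≤ ‖(P n).eval z‖ * q ^ n := by linarith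
    exact le_of_mul_le_mul_right h5 (pow_pos hq n)
  refine ⟨R, hRpos, N, fun n hn => ⟨?_, ?_⟩⟩
  · intro z hzJ
    by_contra hzn
    have hPz : R < ‖(P n).eval z‖ := by
      simp only [Set.mem_preimage, mem_closedBall, dist_zero_right] at hzn
      exact lt_of_not_ge hzn
    set f : ℂ → ℂ := fun w => (P n).eval w with hf
    have hiter : ∀ k : ℕ, 2 ^ k * ‖f z‖ ≤ ‖f^[k] (f z)‖ := by
      intro k
      induction k with
      | zero => simp
      | succ k ih =>
        have h2k : (1:ℝ) ≤ 2 ^ k := one_le_pow₀ one_le_two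
        have hfk : R ≤ ‖f^[k] (f z)‖ := by
          nlinarith [norm_nonneg (f z), hPz, ih]
        rw [Function.iterate_succ_apply']
        have hstep := hkey n hn _ hfk
        calc (2:ℝ) ^ (k + 1) * ‖f z‖ = 2 * (2 ^ k * ‖f z‖) := by ring
          _ ≤ 2 * ‖f^[k] (f z)‖ := by linarith
          _ ≤ ‖f (f^[k] (f z))‖ := hstep
    have hbz : z ∈ basin (P n) := by
      rw [basin, Set.mem_setOf_eq]
      apply (tendsto_add_atTop_iff_nat 1).mp
      have heq : (fun k => ‖f^[k + 1] z‖) = fun k => ‖f^[k] (f z)‖ := by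
        funext k; rw [Function.iterate_succ_apply]
      rw [heq]
      apply tendsto_atTop_mono hiter
      exact (tendsto_pow_atTop_atTop_of_one_lt one_lt_two).atTop_mul_const
        (lt_of_le_of_lt (by linarith) hPz)
    exact hzJ hbz
  · intro z hz
    simp only [Set.mem_preimage, mem_closedBall, dist_zero_right] at hz
    rw [mem_ball, dist_zero_right]
    by_contra h
    push_neg at h
    have hgrow := hkey n hn z h
    linarith
end
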